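/- arXiv:math/0305096 — 9 statements merged into one kernel-verified Lean document; each statement's English description precedes it below -/
import Mathlib

section
/- For every triple (x,y,z) ∈ ℂ³ there exist 2×2 complex matrices A and B of determinant 1 such that tr(A) = x, tr(B) = y, and tr(A*B) = z. (An explicit choice is A = [[x,−1],[1,0]] and B = [[0,ζ⁻¹],[−ζ,y]], where ζ ∈ ℂ* satisfies ζ + ζ⁻¹ = z.) -/
open Matrix

/-- Every triple `(x,y,z) ∈ ℂ³` is the character of a pair of matrices in `SL(2,ℂ)`:
there exist `A, B` of determinant `1` with `tr A = x`, `tr B = y`, `tr (A*B) = z`. -/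
theorem exists_pair_with_character
    (x y z : ℂ) :
    ∃ A B : Matrix (Fin 2) (Fin 2) ℂ,
      A.det = 1 ∧ B.det = 1 ∧ A.trace = x ∧ B.trace = y ∧ (A * B).trace = z := by
  obtain ⟨s, hs⟩ : ∃ s : ℂ, s ^ 2 = z ^ 2 - 4 :=
    IsAlgClosed.exists_pow_nat_eq _ two_pos
  set ζ : ℂ := (z + s) / 2 with hζdef
  have hroot : ζ ^ 2 - z * ζ + 1 = 0 := by
    rw [hζdef]
    field_simp
    ring_nf
    rw [hs]
    ring
  have hζ0 : ζ ≠ 0 := by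
    intro h
    rw [h] at hroot
    simp at hroot
  have key : ζ + ζ⁻¹ = z := by
    have : ζ * (ζ + ζ⁻¹) = ζ * z := by
      field_simp
      linear_combination hroot
    exact mul_left_cancel₀ hζ0 this
  refine ⟨!![x, -1; 1, 0], !![0, ζ⁻¹; -ζ, y], ?_, ?_, ?_, ?_, ?_⟩
  · simp [Matrix.det_fin_two_of]
  · simp [Matrix.det_fin_two_of, inv_mul_cancel₀ hζ0]
  · simp [Matrix.trace_fin_two_of]
  · simp [Matrix.trace_fin_two_of]
  · simp [Matrix.trace_fin_two, Matrix.mul_apply, Fin.sum_univ_two]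
    linear_combination key
end

section
/- Let A and B be 2×2 complex matrices of determinant 1. If tr(A*B*A⁻¹*B⁻¹) = 2, then A and B have a common eigenvector: there exists a nonzero vector v ∈ ℂ² and scalars a, b ∈ ℂ with A·v = a·v and B·v = b·v (equivalently, the pair (A,B) is simultaneously conjugate to a pair of upper-triangular matrices). -/
open Matrix

set_option linter.unreachableTactic false
set_option linter.unusedTactic false

/-- Key polynomial identity relating `det (AB - BA)` to the adjugate form of the
trace of the commutator. -/
lemma det_comm_aux (A B : Matrix (Fin 2) (Fin 2) ℂ) :
    (A * B - B * A).det =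
      2 * A.det * B.det - (A * B * A.adjugate * B.adjugate).trace := by
  simp [Matrix.det_fin_two, Matrix.trace_fin_two, Matrix.mul_apply,
    Matrix.adjugate_fin_two, Fin.sum_univ_two]
  ring

/-- Polarized Cayley–Hamilton: if `tr C = 0` and `tr (A C) = 0` then
`A C + C A = (tr A) • C`. -/
lemma polar_ch (A C : Matrix (Fin 2) (Fin 2) ℂ) (h1 : C.trace = 0)
    (h2 : (A * C).trace = 0) : A * C + C * A = A.trace • C := by
  rw [Matrix.trace_fin_two] at h1
  rw [Matrix.trace_fin_two, Matrix.mul_apply, Matrix.mul_apply,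
    Fin.sum_univ_two, Fin.sum_univ_two] at h2
  ext i j
  fin_cases i <;> fin_cases j <;>
    simp [Matrix.mul_apply, Fin.sum_univ_two, Matrix.trace_fin_two]
  · linear_combination h2 - A 1 1 * h1
  · linear_combination A 0 1 * h1
  · linear_combination A 1 0 * h1
  · linear_combination h2 - A 0 0 * h1

/-- The kernel of a nonzero singular 2×2 matrix is one-dimensional. -/
lemma ker_dim_one (C : Matrix (Fin 2) (Fin 2) ℂ) (hC : C ≠ 0)
    (v w : Fin 2 → ℂ) (hv : v ≠ 0) (hCv : C.mulVec v = 0) (hCw : C.mulVec w = 0) :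
    ∃ a : ℂ, w = a • v := by
  have hCv0 := congrFun hCv 0
  have hCv1 := congrFun hCv 1
  have hCw0 := congrFun hCw 0
  have hCw1 := congrFun hCw 1
  simp [Matrix.mulVec, dotProduct, Fin.sum_univ_two] at hCv0 hCv1 hCw0 hCw1
  by_cases hd : v 0 * w 1 - v 1 * w 0 = 0
  · obtain ⟨i, hi⟩ := Function.ne_iff.mp hv
    fin_cases i
    · have hv0 : v 0 ≠ 0 := hi
      refine ⟨w 0 / v 0, funext fun j => ?_⟩
      fin_cases j <;> simp <;> field_simp
      first | linear_combination hd | linear_combination -hd | linear_combination 2*hd | linear_combination -2*hd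
    · have hv1 : v 1 ≠ 0 := hi
      refine ⟨w 1 / v 1, funext fun j => ?_⟩
      fin_cases j <;> simp <;> field_simp
      first | linear_combination hd | linear_combination -hd | linear_combination 2*hd | linear_combination -2*hd
  · exfalso
    apply hC
    set M : Matrix (Fin 2) (Fin 2) ℂ := !![v 0, w 0; v 1, w 1] with hM
    have hdet : M.det ≠ 0 := by
      rw [hM, Matrix.det_fin_two_of]
      intro hz; apply hd; linear_combination hz
    have hCM : C * M = 0 := by
      ext i j
      fin_cases i <;> fin_cases j <;>
        simp [hM, Matrix.mul_apply, Fin.sum_univ_two] <;>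
        first
          | linear_combination hCv0
          | linear_combination hCw0
          | linear_combination hCv1
          | linear_combination hCw1
    calc C = C * (M * M⁻¹) := by
            rw [Matrix.mul_nonsing_inv M (isUnit_iff_ne_zero.mpr hdet), mul_one]
    _ = (C * M) * M⁻¹ := by rw [mul_assoc]
    _ = 0 := by rw [hCM, zero_mul]

/-- Every 2×2 complex matrix has an eigenvalue. -/
lemma exists_eig (M : Matrix (Fin 2) (Fin 2) ℂ) :
    ∃ μ : ℂ, (M - μ • (1 : Matrix (Fin 2) (Fin 2) ℂ)).det = 0 := by
  have hdeg : 0 < (Polynomial.X ^ 2 -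
      Polynomial.C (M.trace ^ 2 - 4 * M.det)).degree := by
    rw [Polynomial.degree_X_pow_sub_C (by norm_num : 0 < 2)]
    norm_num
  obtain ⟨s, hs⟩ := Complex.exists_root hdeg
  have hs2 : s ^ 2 = M.trace ^ 2 - 4 * M.det := by
    have := hs
    simp only [Polynomial.IsRoot, Polynomial.eval_sub, Polynomial.eval_pow,
      Polynomial.eval_X, Polynomial.eval_C, sub_eq_zero] at this
    exact this
  refine ⟨(M.trace + s) / 2, ?_⟩
  rw [Matrix.trace_fin_two, Matrix.det_fin_two] at hs2
  rw [Matrix.det_fin_two, Matrix.trace_fin_two]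
  simp only [Matrix.sub_apply, Matrix.smul_apply, Matrix.one_apply, smul_eq_mul]
  simp only [if_true, if_neg (by decide : ¬((0:Fin 2) = 1)),
    if_neg (by decide : ¬((1:Fin 2) = 0)), ite_true, mul_zero, mul_one, sub_zero]
  linear_combination (1/4 : ℂ) * hs2

/-- Eigenvector form. -/
lemma exists_eigvec (M : Matrix (Fin 2) (Fin 2) ℂ) :
    ∃ (μ : ℂ) (v : Fin 2 → ℂ), v ≠ 0 ∧ M.mulVec v = μ • v := by
  obtain ⟨μ, hμ⟩ := exists_eig M
  obtain ⟨v, hv, hMv⟩ := (Matrix.exists_mulVec_eq_zero_iff).mpr hμ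
  refine ⟨μ, v, hv, ?_⟩
  have := hMv
  rw [Matrix.sub_mulVec, Matrix.smul_mulVec, Matrix.one_mulVec,
    sub_eq_zero] at this
  exact this

/-- If `A, B ∈ SL(2,ℂ)` satisfy `tr [A,B] = 2`, then `A` and `B` have a common
eigenvector: the representation is reducible. -/
theorem common_eigenvector_of_trace_commutator_eq_two
    (A B : Matrix (Fin 2) (Fin 2) ℂ) (hA : A.det = 1) (hB : B.det = 1)
    (h : (A * B * A⁻¹ * B⁻¹).trace = 2) :
    ∃ (v : Fin 2 → ℂ) (a b : ℂ),
      v ≠ 0 ∧ A.mulVec v = a • v ∧ B.mulVec v = b • v := by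
  have hAinv : A⁻¹ = A.adjugate := by
    rw [Matrix.inv_def, hA]; simp
  have hBinv : B⁻¹ = B.adjugate := by
    rw [Matrix.inv_def, hB]; simp
  rw [hAinv, hBinv] at h
  set C : Matrix (Fin 2) (Fin 2) ℂ := A * B - B * A with hCdef
  have trC : C.trace = 0 := by
    rw [hCdef, Matrix.trace_sub, Matrix.trace_mul_comm, sub_self]
  have detC : C.det = 0 := by
    rw [hCdef, det_comm_aux, hA, hB, h]; ring
  have trAC : (A * C).trace = 0 := by
    have e1 : (A * (A * B)).trace = (A * (B * A)).trace := by
      rw [Matrix.trace_mul_comm, mul_assoc]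
    rw [hCdef, mul_sub, Matrix.trace_sub, e1, sub_self]
  have trBC : (B * C).trace = 0 := by
    have e2 : (B * (B * A)).trace = (B * (A * B)).trace := by
      rw [Matrix.trace_mul_comm, mul_assoc]
    rw [hCdef, mul_sub, Matrix.trace_sub, ← e2, sub_self]
  by_cases hC0 : C = 0
  · -- A and B commute
    have comm : A * B = B * A := by rwa [hCdef, sub_eq_zero] at hC0
    obtain ⟨μ, v, hv, hAv⟩ := exists_eigvec A
    by_cases hD : A - μ • (1 : Matrix (Fin 2) (Fin 2) ℂ) = 0
    · -- A is scalar
      obtain ⟨ν, w, hw, hBw⟩ := exists_eigvec B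
      have hAs : A = μ • (1 : Matrix (Fin 2) (Fin 2) ℂ) := by
        rwa [sub_eq_zero] at hD
      refine ⟨w, μ, ν, hw, ?_, hBw⟩
      rw [hAs, Matrix.smul_mulVec, Matrix.one_mulVec]
    · set D : Matrix (Fin 2) (Fin 2) ℂ := A - μ • 1 with hDdef
      have hDv : D.mulVec v = 0 := by
        rw [hDdef, Matrix.sub_mulVec, Matrix.smul_mulVec,
          Matrix.one_mulVec, hAv, sub_self]
      have hDB : D * B = B * D := by
        rw [hDdef, sub_mul, mul_sub, comm, Matrix.smul_mul, Matrix.mul_smul,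
          one_mul, mul_one]
      have hDBv : D.mulVec (B.mulVec v) = 0 := by
        rw [Matrix.mulVec_mulVec, hDB, ← Matrix.mulVec_mulVec, hDv,
          Matrix.mulVec_zero]
      obtain ⟨b, hb⟩ := ker_dim_one D hD v (B.mulVec v) hv hDv hDBv
      exact ⟨v, μ, b, hv, hAv, hb⟩
  · -- C ≠ 0 : use kernel of C
    obtain ⟨v, hv, hCv⟩ := (Matrix.exists_mulVec_eq_zero_iff).mpr detC
    have key : ∀ X : Matrix (Fin 2) (Fin 2) ℂ, (X * C).trace = 0 →
        C.mulVec (X.mulVec v) = 0 := by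
      intro X hX
      have hp := polar_ch X C trC hX
      have : C * X = X.trace • C - X * C := by
        rw [← hp]; abel
      rw [Matrix.mulVec_mulVec, this, Matrix.sub_mulVec,
        Matrix.smul_mulVec, hCv, ← Matrix.mulVec_mulVec, hCv,
        Matrix.mulVec_zero, smul_zero, sub_zero]
    obtain ⟨a, ha⟩ := ker_dim_one C hC0 v (A.mulVec v) hv hCv (key A trAC)
    obtain ⟨b, hb⟩ := ker_dim_one C hC0 v (B.mulVec v) hv hCv (key B trBC)
    exact ⟨v, a, b, hv, ha, hb⟩
end

section
/- Let (x,y,z) ∈ ℂ³ satisfy κ(x,y,z) = 2, where κ(x,y,z) = x² + y² + z² − x·y·z − 2. Then there exist nonzero complex numbers ξ and η such that x = ξ + ξ⁻¹, y = η + η⁻¹, and z = ξ·η + (ξ·η)⁻¹. -/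
lemma exists_inv_sum (x : ℂ) : ∃ ξ : ℂ, ξ ≠ 0 ∧ x = ξ + ξ⁻¹ := by
  obtain ⟨s, hs⟩ := IsAlgClosed.exists_pow_nat_eq (k := ℂ) (x ^ 2 - 4) zero_lt_two
  refine ⟨(x + s) / 2, ?_, ?_⟩ <;>
  · have key : (x + s) / 2 * (x - (x + s) / 2) = 1 := by
      have : s ^ 2 = x ^ 2 - 4 := hs
      field_simp
      ring_nf
      linear_combination -this
    first
    | exact left_ne_zero_of_mul (key.trans_ne one_ne_zero)
    | · have h0 : (x + s) / 2 ≠ 0 := left_ne_zero_of_mul (key.trans_ne one_ne_zero)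
        have hinv : ((x + s) / 2)⁻¹ = x - (x + s) / 2 :=
          eq_inv_of_mul_eq_one_left (by linear_combination key) |>.symm
        rw [hinv]; ring

/-- Every point of the level set `κ = 2` comes from a diagonal (reducible) character:
if `κ(x,y,z) = 2` then `x = ξ + ξ⁻¹`, `y = η + η⁻¹`, `z = ξη + (ξη)⁻¹` for some
nonzero `ξ, η ∈ ℂ`. -/
theorem kappa_eq_two_reducible
    (x y z : ℂ) (h : x ^ 2 + y ^ 2 + z ^ 2 - x * y * z - 2 = 2) :
    ∃ ξ η : ℂ, ξ ≠ 0 ∧ η ≠ 0 ∧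
      x = ξ + ξ⁻¹ ∧ y = η + η⁻¹ ∧ z = ξ * η + (ξ * η)⁻¹ := by
  obtain ⟨ξ, hξ0, hx⟩ := exists_inv_sum x
  obtain ⟨η, hη0, hy⟩ := exists_inv_sum y
  set a := ξ * η + (ξ * η)⁻¹ with ha_def
  set b := ξ * η⁻¹ + (ξ * η⁻¹)⁻¹ with hb_def
  have ha : a + b = x * y := by
    rw [ha_def, hb_def, hx, hy]
    field_simp
    ring
  have hb : a * b = x ^ 2 + y ^ 2 - 4 := by
    rw [ha_def, hb_def, hx, hy]
    field_simp
    ring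
  have hprod : (z - a) * (z - b) = 0 := by linear_combination h - z * ha + hb
  rcases mul_eq_zero.1 hprod with hz | hz
  · exact ⟨ξ, η, hξ0, hη0, hx, hy, by linear_combination hz⟩
  · refine ⟨ξ, η⁻¹, hξ0, inv_ne_zero hη0, hx, ?_, by linear_combination hz⟩
    rw [inv_inv, add_comm]; exact hy
end

section
/- For real numbers x, y, z, the real symmetric 3×3 matrix B = [[2, z, y], [z, 2, x], [y, x, 2]] is positive definite if and only if −2 ≤ x ≤ 2, −2 ≤ y ≤ 2, −2 ≤ z ≤ 2, and κ(x,y,z) < 2, where κ(x,y,z) = x² + y² + z² − x·y·z − 2. -/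
/-!
By Sylvester's criterion, `B` is positive definite iff its leading principal minors
`2`, `4 - z²` and `det B = 2 (2 - κ)` are positive. The identity
`(4 - y²)(4 - z²) = (2x - yz)² + 4 (2 - κ)` and its analogue with `x, y` swapped then turn
`z² < 4 ∧ κ < 2` into the box conditions `|x|, |y|, |z| ≤ 2` together with `κ < 2`, and back.
-/

open Matrix

theorem Matrix.posDef_fin_three_iff (a b c d e f : ℝ) :
    (!![a, d, e; d, b, f; e, f, c]).PosDef ↔
      0 < a ∧ 0 < a * b - d ^ 2 ∧ 0 < (!![a, d, e; d, b, f; e, f, c]).det := by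
  set M := !![a, d, e; d, b, f; e, f, c]
  constructor
  · intro hM
    have hminor := (hM.submatrix (e := (Fin.castSucc : Fin 2 → Fin 3))
      (Fin.castSucc_injective 2)).det_pos
    rw [det_fin_two] at hminor
    refine ⟨hM.diag_pos (i := 0), ?_, hM.det_pos⟩
    simpa [M, sq] using hminor
  · rintro ⟨ha, hm, hdet⟩
    -- completing the square twice, i.e. the `LDLᵀ` decomposition of `M`
    have hLDL (v : Fin 3 → ℝ) : a * (a * b - d ^ 2) * (star v ⬝ᵥ (M *ᵥ v)) =
        (a * b - d ^ 2) * (a * v 0 + d * v 1 + e * v 2) ^ 2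
          + ((a * b - d ^ 2) * v 1 + (a * f - d * e) * v 2) ^ 2 + a * M.det * v 2 ^ 2 := by
      simp [M, det_fin_three, mulVec, dotProduct, Fin.sum_univ_three]
      ring
    refine .of_dotProduct_mulVec_pos ?_ fun v hv => ?_
    · ext i j; fin_cases i <;> fin_cases j <;> rfl
    refine pos_of_mul_pos_right (a := a * (a * b - d ^ 2)) ?_ (by positivity)
    rw [hLDL]
    obtain h2 | h2 := eq_or_ne (v 2) 0
    · obtain h1 | h1 := eq_or_ne (v 1) 0
      · have h0 : v 0 ≠ 0 := fun h0 => hv (by ext i; fin_cases i <;> assumption)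
        simp only [h1, h2, mul_zero, add_zero, ne_eq, OfNat.ofNat_ne_zero, not_false_eq_true,
          zero_pow]
        positivity
      · simp only [h2, mul_zero, add_zero, ne_eq, OfNat.ofNat_ne_zero, not_false_eq_true,
          zero_pow]
        positivity
    · positivity

def kappa (x y z : ℝ) : ℝ := x ^ 2 + y ^ 2 + z ^ 2 - x * y * z - 2

lemma kappa_swap (x y z : ℝ) : kappa y x z = kappa x y z := by
  unfold kappa; ring

lemma det_eq_two_mul_two_sub_kappa (x y z : ℝ) :
    (!![(2 : ℝ), z, y; z, 2, x; y, x, 2]).det = 2 * (2 - kappa x y z) := by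
  simp [det_fin_three, kappa]
  ring

lemma four_sub_sq_mul_four_sub_sq (x y z : ℝ) :
    (4 - y ^ 2) * (4 - z ^ 2) = (2 * x - y * z) ^ 2 + 4 * (2 - kappa x y z) := by
  unfold kappa; ring

lemma four_sub_sq_mul_four_sub_sq_pos {x y z : ℝ} (hκ : kappa x y z < 2) :
    0 < (4 - y ^ 2) * (4 - z ^ 2) := by
  rw [four_sub_sq_mul_four_sub_sq x]
  nlinarith [sq_nonneg (2 * x - y * z)]

/-- The real symmetric matrix `B = [[2,z,y],[z,2,x],[y,x,2]]` is positive definite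
iff `−2 ≤ x,y,z ≤ 2` and `κ(x,y,z) < 2`, where `κ(x,y,z) = x² + y² + z² − xyz − 2`. -/
theorem bilinear_form_posDef_iff
    (x y z : ℝ) :
    (!![(2 : ℝ), z, y; z, 2, x; y, x, 2]).PosDef ↔
      (-2 ≤ x ∧ x ≤ 2) ∧ (-2 ≤ y ∧ y ≤ 2) ∧ (-2 ≤ z ∧ z ≤ 2) ∧
        x ^ 2 + y ^ 2 + z ^ 2 - x * y * z - 2 < 2 := by
  rw [posDef_fin_three_iff, det_eq_two_mul_two_sub_kappa]
  change _ ↔ _ ∧ _ ∧ _ ∧ kappa x y z < 2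
  constructor
  · rintro ⟨-, hz, hdet⟩
    have hκ : kappa x y z < 2 := by linarith
    have hz : 0 < 4 - z ^ 2 := by linarith
    have hx := pos_of_mul_pos_left
      (four_sub_sq_mul_four_sub_sq_pos ((kappa_swap x y z).trans_lt hκ)) hz.le
    have hy := pos_of_mul_pos_left (four_sub_sq_mul_four_sub_sq_pos hκ) hz.le
    exact ⟨abs_le_of_sq_le_sq' (by linarith) zero_le_two,
      abs_le_of_sq_le_sq' (by linarith) zero_le_two,
      abs_le_of_sq_le_sq' (by linarith) zero_le_two, hκ⟩
  · rintro ⟨-, ⟨hy₁, hy₂⟩, ⟨hz₁, hz₂⟩, hκ⟩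
    have hy : y ^ 2 ≤ 2 ^ 2 := sq_le_sq' hy₁ hy₂
    have hz := pos_of_mul_pos_right (four_sub_sq_mul_four_sub_sq_pos hκ) (by linarith)
    exact ⟨two_pos, by linarith, by linarith⟩
end

section
/- Let θ ∈ ℝ, let ξ = [[cos θ, −sin θ], [sin θ, cos θ]] be a rotation matrix, and let η = [[a, b], [c, d]] be a real 2×2 matrix with a·d − b·c = 1. Then tr(ξ*η*ξ⁻¹*η⁻¹) = 2 + sin²(θ)·(a² + b² + c² + d² − 2); in particular tr(ξ*η*ξ⁻¹*η⁻¹) ≥ 2. -/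
open Matrix Real

/-- If `ξ` is a rotation matrix and `η ∈ SL(2,ℝ)`, then
`tr [ξ,η] = 2 + sin²θ (a² + b² + c² + d² − 2) ≥ 2`. -/
theorem trace_commutator_rotation
    (θ a b c d : ℝ) (hη : a * d - b * c = 1)
    (ξ η : Matrix (Fin 2) (Fin 2) ℝ)
    (hξ : ξ = !![Real.cos θ, -Real.sin θ; Real.sin θ, Real.cos θ])
    (hηm : η = !![a, b; c, d]) :
    (ξ * η * ξ⁻¹ * η⁻¹).trace
        = 2 + Real.sin θ ^ 2 * (a ^ 2 + b ^ 2 + c ^ 2 + d ^ 2 - 2) ∧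
      2 ≤ (ξ * η * ξ⁻¹ * η⁻¹).trace := by
  have hpyth := Real.sin_sq_add_cos_sq θ
  have hξi : ξ⁻¹ = !![Real.cos θ, Real.sin θ; -Real.sin θ, Real.cos θ] := by
    rw [hξ, Matrix.inv_def, Matrix.adjugate_fin_two, Matrix.det_fin_two_of]
    simp only [Matrix.cons_val', Matrix.cons_val_zero, Matrix.cons_val_one, Matrix.head_cons,
      Matrix.head_fin_const, Matrix.smul_of]
    have : Real.cos θ * Real.cos θ - -Real.sin θ * Real.sin θ = 1 := by nlinarith
    rw [this]
    norm_num
  have hηi : η⁻¹ = !![d, -b; -c, a] := by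
    rw [hηm, Matrix.inv_def, Matrix.adjugate_fin_two, Matrix.det_fin_two_of, hη]
    norm_num
  have key : (ξ * η * ξ⁻¹ * η⁻¹).trace
      = 2 + Real.sin θ ^ 2 * (a ^ 2 + b ^ 2 + c ^ 2 + d ^ 2 - 2) := by
    rw [hξi, hηi, hξ, hηm]
    simp [Matrix.mul_fin_two, Matrix.trace_fin_two_of]
    nlinarith [hpyth]
  refine ⟨key, ?_⟩
  rw [key]
  nlinarith [sq_nonneg (Real.sin θ), sq_nonneg (a-d), sq_nonneg (b+c), sq_nonneg (Real.sin θ * (a - d)), sq_nonneg (Real.sin θ * (b + c))]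
end

section
/- Let ξ and η be 2×2 real matrices of determinant 1. If tr(ξ*η*ξ⁻¹*η⁻¹) < 2, then both ξ and η are hyperbolic, i.e. |tr(ξ)| > 2 and |tr(η)| > 2. -/
open Matrix

set_option maxHeartbeats 1000000

lemma key_ineq (e f g u v w : ℝ) (h1 : e^2 + f*g ≤ 0) (h2 : u^2 + v*w ≤ 0) :
    4*(e^2+f*g)*(u^2+v*w) ≤ (2*e*u + f*w + g*v)^2 := by
  by_cases hf : f = 0
  · subst hf
    nlinarith [mul_nonneg (sq_nonneg e) (neg_nonneg.2 h2), sq_nonneg (2*e*u + g*v)]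
  · have hf2 : 0 < f^2 := by positivity
    nlinarith [sq_nonneg (f*(f*w - g*v) + 2*e*(f*u - e*v)),
      mul_nonneg (neg_nonneg.2 h1) (sq_nonneg (f*u - e*v)), hf2, h1, h2]

lemma inv_fin_two (A : Matrix (Fin 2) (Fin 2) ℝ) (h : A.det = 1) :
    A⁻¹ = !![A 1 1, -A 0 1; -A 1 0, A 0 0] := by
  rw [Matrix.det_fin_two] at h
  apply inv_eq_right_inv
  ext i j
  fin_cases i <;> fin_cases j <;>
    simp [Matrix.mul_apply, Fin.sum_univ_two] <;> ring_nf <;> linarith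

lemma abstract_hyp (x y z : ℝ) (hT : x^2 + y^2 + z^2 - x*y*z < 4)
    (hC : x^2 ≤ 4 → y^2 ≤ 4 → (4 - x^2)*(4 - y^2) ≤ (2*z - x*y)^2) :
    4 < x^2 := by
  by_contra hx
  push_neg at hx
  rcases le_or_gt (y^2) 4 with hy | hy
  · have := hC hx hy
    nlinarith [sq_nonneg (2*z - x*y)]
  · nlinarith [sq_nonneg (2*z - x*y),
      mul_nonneg (by linarith : (0:ℝ) ≤ 4 - x^2) (by linarith : (0:ℝ) ≤ y^2 - 4)]

lemma both_hyp (a b c d p q r s : ℝ) (hA : a*d - b*c = 1) (hB : p*s - q*r = 1)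
    (hT : (a+d)^2 + (p+s)^2 + (a*p+b*r+c*q+d*s)^2
        - (a+d)*(p+s)*(a*p+b*r+c*q+d*s) < 4) :
    4 < (a+d)^2 ∧ 4 < (p+s)^2 := by
  have hC : (a+d)^2 ≤ 4 → (p+s)^2 ≤ 4 →
      (4 - (a+d)^2)*(4 - (p+s)^2)
        ≤ (2*(a*p+b*r+c*q+d*s) - (a+d)*(p+s))^2 := by
    intro h1 h2
    have e1 : (a-d)^2 + (2*b)*(2*c) ≤ 0 := by
      have : (a-d)^2 + (2*b)*(2*c) = (a+d)^2 - 4*(a*d - b*c) := by ring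
      rw [this, hA]; linarith
    have e2 : (p-s)^2 + (2*q)*(2*r) ≤ 0 := by
      have : (p-s)^2 + (2*q)*(2*r) = (p+s)^2 - 4*(p*s - q*r) := by ring
      rw [this, hB]; linarith
    have hk := key_ineq (a-d) (2*b) (2*c) (p-s) (2*q) (2*r) e1 e2
    have eL : 4*((a-d)^2 + (2*b)*(2*c))*((p-s)^2 + (2*q)*(2*r))
        = 4*((a+d)^2 - 4*(a*d-b*c))*((p+s)^2 - 4*(p*s-q*r)) := by ring
    rw [eL, hA, hB] at hk
    have eR : (2*(a-d)*(p-s) + (2*b)*(2*r) + (2*c)*(2*q))^2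
        = 4*(2*(a*p+b*r+c*q+d*s) - (a+d)*(p+s))^2 := by ring
    rw [eR] at hk
    nlinarith [hk]
  have hCy : (p+s)^2 ≤ 4 → (a+d)^2 ≤ 4 →
      (4 - (p+s)^2)*(4 - (a+d)^2)
        ≤ (2*(a*p+b*r+c*q+d*s) - (p+s)*(a+d))^2 := by
    intro h1 h2
    have := hC h2 h1
    nlinarith [this]
  exact ⟨abstract_hyp _ _ _ hT hC,
    abstract_hyp (p+s) (a+d) (a*p+b*r+c*q+d*s) (by nlinarith [hT]) hCy⟩

/-- If `ξ, η ∈ SL(2,ℝ)` satisfy `tr [ξ,η] < 2`, then both `ξ` and `η` are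
hyperbolic: `|tr ξ| > 2` and `|tr η| > 2`. -/
theorem hyperbolic_of_trace_commutator_lt_two
    (ξ η : Matrix (Fin 2) (Fin 2) ℝ) (hξ : ξ.det = 1) (hη : η.det = 1)
    (h : (ξ * η * ξ⁻¹ * η⁻¹).trace < 2) :
    2 < |ξ.trace| ∧ 2 < |η.trace| := by
  have hA : ξ 0 0 * ξ 1 1 - ξ 0 1 * ξ 1 0 = 1 := by rwa [Matrix.det_fin_two] at hξ
  have hB : η 0 0 * η 1 1 - η 0 1 * η 1 0 = 1 := by rwa [Matrix.det_fin_two] at hη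
  have hkey : (ξ * η * ξ⁻¹ * η⁻¹).trace
      = (ξ 0 0 + ξ 1 1)^2 + (η 0 0 + η 1 1)^2
        + (ξ 0 0 * η 0 0 + ξ 0 1 * η 1 0 + ξ 1 0 * η 0 1 + ξ 1 1 * η 1 1)^2
        - (ξ 0 0 + ξ 1 1) * (η 0 0 + η 1 1)
          * (ξ 0 0 * η 0 0 + ξ 0 1 * η 1 0 + ξ 1 0 * η 0 1 + ξ 1 1 * η 1 1)
        - 2 := by
    rw [inv_fin_two ξ hξ, inv_fin_two η hη, Matrix.trace_fin_two]
    simp [Matrix.mul_apply, Fin.sum_univ_two]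
    linear_combination (η 1 1 ^ 2 + 2 * η 0 1 * η 1 0 + η 0 0 ^ 2) * hA
      + (ξ 0 0 ^ 2 + 2 * ξ 0 0 * ξ 1 1 + ξ 1 1 ^ 2 - 2) * hB
  rw [hkey] at h
  obtain ⟨h1, h2⟩ := both_hyp (ξ 0 0) (ξ 0 1) (ξ 1 0) (ξ 1 1)
    (η 0 0) (η 0 1) (η 1 0) (η 1 1) hA hB (by linarith)
  rw [Matrix.trace_fin_two, Matrix.trace_fin_two]
  constructor
  · nlinarith [sq_abs (ξ 0 0 + ξ 1 1), abs_nonneg (ξ 0 0 + ξ 1 1)]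
  · nlinarith [sq_abs (η 0 0 + η 1 1), abs_nonneg (η 0 0 + η 1 1)]
end

section
/- Let θ, φ, r ∈ ℝ, let ξ = [[cosh θ, sinh θ], [sinh θ, cosh θ]] and η = [[e^φ, −2·r·sinh φ], [0, e^{−φ}]]. Then tr(ξ*η*ξ⁻¹*η⁻¹) = 2 + 4·(r² − 1)·sinh²(θ)·sinh²(φ). Consequently, if θ ≠ 0 and φ ≠ 0, then tr(ξ*η*ξ⁻¹*η⁻¹) < 2 if and only if −1 < r < 1, and tr(ξ*η*ξ⁻¹*η⁻¹) = 2 if and only if r = 1 or r = −1. -/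
open Matrix Real

/-- For `ξ = [[cosh θ, sinh θ],[sinh θ, cosh θ]]` and
`η = [[e^φ, −2r sinh φ],[0, e^{−φ}]]`, one has
`tr [ξ,η] = 2 + 4(r² − 1) sinh²θ sinh²φ`; hence if `θ ≠ 0` and `φ ≠ 0`, then
`tr [ξ,η] < 2 ↔ −1 < r < 1` and `tr [ξ,η] = 2 ↔ r = ±1`. -/
theorem trace_commutator_hyperbolic_axes
    (θ φ r : ℝ)
    (ξ η : Matrix (Fin 2) (Fin 2) ℝ)
    (hξ : ξ = !![Real.cosh θ, Real.sinh θ; Real.sinh θ, Real.cosh θ])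
    (hη : η = !![Real.exp φ, -2 * r * Real.sinh φ; 0, Real.exp (-φ)]) :
    (ξ * η * ξ⁻¹ * η⁻¹).trace
        = 2 + 4 * (r ^ 2 - 1) * Real.sinh θ ^ 2 * Real.sinh φ ^ 2 ∧
      (θ ≠ 0 → φ ≠ 0 →
        (((ξ * η * ξ⁻¹ * η⁻¹).trace < 2 ↔ -1 < r ∧ r < 1) ∧
         ((ξ * η * ξ⁻¹ * η⁻¹).trace = 2 ↔ r = 1 ∨ r = -1))) := by
  have hch : Real.cosh θ ^ 2 - Real.sinh θ ^ 2 = 1 := Real.cosh_sq_sub_sinh_sq θ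
  have hexp : Real.exp φ * Real.exp (-φ) = 1 := by
    rw [← Real.exp_add]; simp
  have hsinh : Real.sinh φ = (Real.exp φ - Real.exp (-φ)) / 2 := Real.sinh_eq φ
  have hξi : ξ⁻¹ = !![Real.cosh θ, -Real.sinh θ; -Real.sinh θ, Real.cosh θ] := by
    apply inv_eq_right_inv
    rw [hξ]
    ext i j
    fin_cases i <;> fin_cases j <;>
      simp [Matrix.mul_apply, Fin.sum_univ_two, Matrix.one_apply] <;> nlinarith [hch]
  have hηi : η⁻¹ = !![Real.exp (-φ), 2 * r * Real.sinh φ; 0, Real.exp φ] := by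
    apply inv_eq_right_inv
    rw [hη]
    ext i j
    fin_cases i <;> fin_cases j <;>
      simp [Matrix.mul_apply, Fin.sum_univ_two, Matrix.one_apply] <;> nlinarith [hexp]
  have key : (ξ * η * ξ⁻¹ * η⁻¹).trace
      = 2 + 4 * (r ^ 2 - 1) * Real.sinh θ ^ 2 * Real.sinh φ ^ 2 := by
    rw [hξi, hηi, hξ, hη]
    simp [Matrix.trace_fin_two, Matrix.mul_apply, Fin.sum_univ_two]
    rw [hsinh]
    nlinarith [hch, hexp, sq_nonneg (Real.exp φ - Real.exp (-φ)),
      sq_nonneg (Real.sinh θ), mul_self_nonneg (Real.exp φ)]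
  refine ⟨key, fun hθ hφ => ?_⟩
  have hsθ : Real.sinh θ ^ 2 > 0 := by
    have : Real.sinh θ ≠ 0 := fun h => hθ (by simpa using Real.sinh_eq_zero.mp h)
    positivity
  have hsφ : Real.sinh φ ^ 2 > 0 := by
    have : Real.sinh φ ≠ 0 := fun h => hφ (by simpa using Real.sinh_eq_zero.mp h)
    positivity
  rw [key]
  constructor
  · constructor
    · intro h
      have hr2 : r ^ 2 < 1 := by nlinarith [mul_pos hsθ hsφ]
      constructor <;> nlinarith
    · rintro ⟨h1, h2⟩
      have hr2 : r ^ 2 < 1 := by nlinarith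
      nlinarith [mul_pos hsθ hsφ]
  · constructor
    · intro h
      have h0 : (r ^ 2 - 1) * (Real.sinh θ ^ 2 * Real.sinh φ ^ 2) = 0 := by
        linear_combination h / 4
      have hne : Real.sinh θ ^ 2 * Real.sinh φ ^ 2 ≠ 0 := (mul_pos hsθ hsφ).ne'
      have hr2 : r ^ 2 - 1 = 0 := by
        rcases mul_eq_zero.mp h0 with h' | h'
        · exact h'
        · exact absurd h' hne
      have h1 : (r - 1) * (r + 1) = 0 := by linear_combination hr2
      rcases mul_eq_zero.mp h1 with h' | h'
      · left; linarith
      · right; linarith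
    · rintro (rfl | rfl) <;> ring
end

section
/- Let x, y, z be real numbers with 2 < x ≤ y ≤ z, and suppose κ(x,y,z) > 2, where κ(x,y,z) = x² + y² + z² − x·y·z − 2. Set z' = x·y − z. Then z − z' > 2·√(κ(x,y,z) − 2). -/
/-- The trace-reduction inequality: if `2 < x ≤ y ≤ z` and `κ(x,y,z) > 2`,
then setting `z' = xy − z` one has `z − z' > 2√(κ(x,y,z) − 2)`. -/
theorem trace_reduction
    (x y z : ℝ) (hx : 2 < x) (hxy : x ≤ y) (hyz : y ≤ z)
    (hκ : 2 < x ^ 2 + y ^ 2 + z ^ 2 - x * y * z - 2) :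
    z - (x * y - z)
      > 2 * Real.sqrt ((x ^ 2 + y ^ 2 + z ^ 2 - x * y * z - 2) - 2) := by
  have h2 : (0:ℝ) < (x ^ 2 + y ^ 2 + z ^ 2 - x * y * z - 2) - 2 := by linarith
  have hs := Real.sq_sqrt h2.le
  have hsnn := Real.sqrt_nonneg ((x ^ 2 + y ^ 2 + z ^ 2 - x * y * z - 2) - 2)
  -- f(y) < 0
  have hfy : y ^ 2 - x * y * y + x ^ 2 + y ^ 2 - (x ^ 2 + y ^ 2 + z ^ 2 - x * y * z - 2) - 2 < 0 := by
    nlinarith [mul_nonneg (sub_pos.2 hx).le (by nlinarith : (0:ℝ) ≤ y ^ 2 - x ^ 2),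
      mul_pos (mul_pos (sub_pos.2 hx) (sub_pos.2 hx)) (by linarith : (0:ℝ) < x + 1)]
  -- d = 2z - xy > 0
  have hd : 0 < 2 * z - x * y := by
    nlinarith [mul_nonneg (by linarith : (0:ℝ) ≤ z - y) (by linarith : (0:ℝ) ≤ z - y)]
  nlinarith [mul_pos (by nlinarith : (0:ℝ) < x ^ 2 - 4) (by nlinarith : (0:ℝ) < y ^ 2 - 4),
    mul_pos hd (by positivity : (0:ℝ) < (2:ℝ))]
end

section
/- Let A and B be elements of the special unitary group SU(2), i.e. 2×2 complex unitary matrices of determinant 1. Then the traces tr(A), tr(B), tr(A*B) and tr(A*B*A⁻¹*B⁻¹) are all real numbers lying in the interval [−2, 2]; moreover, writing x = tr(A), y = tr(B), z = tr(A*B) (as real numbers), one has −2 ≤ κ(x,y,z) ≤ 2, where κ(x,y,z) = x² + y² + z² − x·y·z − 2. Hence the character of any SU(2)-representation lies in [−2,2]³ ∩ {κ ≤ 2}. -/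
open Matrix

/-- Trace of an `SU(2)` matrix is real and lies in `[-2,2]`. -/
lemma su2_trace_bound (U : Matrix (Fin 2) (Fin 2) ℂ)
    (hU : U ∈ Matrix.specialUnitaryGroup (Fin 2) ℂ) :
    U.trace.im = 0 ∧ -2 ≤ U.trace.re ∧ U.trace.re ≤ 2 := by
  obtain ⟨⟨h1, h2⟩, hdet⟩ := Matrix.mem_specialUnitaryGroup_iff.mp hU
  have hadj : U * U.adjugate = 1 := by rw [Matrix.mul_adjugate, hdet, one_smul]
  have hstar : star U = U.adjugate := by
    calc star U = star U * (U * U.adjugate) := by rw [hadj, mul_one]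
    _ = (star U * U) * U.adjugate := by rw [mul_assoc]
    _ = U.adjugate := by rw [h1, one_mul]
  have h11 : U 1 1 = star (U 0 0) := by
    have := congrFun (congrFun hstar 0) 0
    rw [Matrix.star_apply, Matrix.adjugate_fin_two] at this
    simp at this
    exact this.symm
  have hnorm : U 0 0 * star (U 0 0) + U 0 1 * star (U 0 1) = 1 := by
    have := congrFun (congrFun h2 0) 0
    simpa [Matrix.mul_apply, Fin.sum_univ_succ, Matrix.star_apply] using this
  have hn : Complex.normSq (U 0 0) + Complex.normSq (U 0 1) = 1 := by
    have := congrArg Complex.re hnorm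
    simpa [Complex.mul_conj, ← Complex.ofReal_add] using this
  have hre : (U 0 0).re ^ 2 ≤ 1 := by
    have := Complex.normSq_nonneg (U 0 1)
    have h0 : Complex.normSq (U 0 0) = (U 0 0).re ^ 2 + (U 0 0).im ^ 2 := by
      simp [Complex.normSq_apply]; ring
    nlinarith [sq_nonneg (U 0 0).im]
  have htr : U.trace = U 0 0 + star (U 0 0) := by
    rw [Matrix.trace_fin_two, h11]
  constructor
  · rw [htr]; simp [Complex.add_im]
  · rw [htr]
    have h2re : (U 0 0 + star (U 0 0)).re = 2 * (U 0 0).re := by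
      simp [Complex.add_re]; ring
    rw [h2re]
    constructor <;> nlinarith [sq_nonneg ((U 0 0).re - 1), sq_nonneg ((U 0 0).re + 1)]

/-- The Fricke trace identity for `SL(2,ℂ)`. -/
lemma fricke_identity (M N : Matrix (Fin 2) (Fin 2) ℂ) (hM : M.det = 1) (hN : N.det = 1) :
    (M * N * M.adjugate * N.adjugate).trace
      = M.trace ^ 2 + N.trace ^ 2 + (M * N).trace ^ 2
        - M.trace * N.trace * (M * N).trace - 2 := by
  rw [Matrix.det_fin_two] at hM hN
  rw [Matrix.adjugate_fin_two, Matrix.adjugate_fin_two]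
  simp [Matrix.trace_fin_two, Matrix.mul_apply, Fin.sum_univ_succ]
  ring_nf
  linear_combination ((N 0 0 + N 1 1) ^ 2 - 2) * hM
    + ((M 0 0) ^ 2 + 2 * (M 0 1) * (M 1 0) + (M 1 1) ^ 2) * hN

/-- The character of any `SU(2)`-representation lies in `[−2,2]³ ∩ {−2 ≤ κ ≤ 2}`:
for `A, B ∈ SU(2)`, the traces of `A`, `B`, `A*B` and the commutator `[A,B]` are
real numbers in `[−2,2]`, and `κ(tr A, tr B, tr (A*B)) ∈ [−2,2]`. -/
theorem su2_character_bounds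
    (A B : Matrix.specialUnitaryGroup (Fin 2) ℂ)
    (x y z w : ℂ)
    (hx : x = (A : Matrix (Fin 2) (Fin 2) ℂ).trace)
    (hy : y = (B : Matrix (Fin 2) (Fin 2) ℂ).trace)
    (hz : z = ((A : Matrix (Fin 2) (Fin 2) ℂ) * B).trace)
    (hw : w = ((A : Matrix (Fin 2) (Fin 2) ℂ) * B * (A : Matrix (Fin 2) (Fin 2) ℂ)⁻¹
        * (B : Matrix (Fin 2) (Fin 2) ℂ)⁻¹).trace) :
    (x.im = 0 ∧ -2 ≤ x.re ∧ x.re ≤ 2) ∧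
    (y.im = 0 ∧ -2 ≤ y.re ∧ y.re ≤ 2) ∧
    (z.im = 0 ∧ -2 ≤ z.re ∧ z.re ≤ 2) ∧
    (w.im = 0 ∧ -2 ≤ w.re ∧ w.re ≤ 2) ∧
    (-2 ≤ x.re ^ 2 + y.re ^ 2 + z.re ^ 2 - x.re * y.re * z.re - 2 ∧
      x.re ^ 2 + y.re ^ 2 + z.re ^ 2 - x.re * y.re * z.re - 2 ≤ 2) := by
  obtain ⟨hAu, hAdet⟩ := Matrix.mem_specialUnitaryGroup_iff.mp A.2
  obtain ⟨hBu, hBdet⟩ := Matrix.mem_specialUnitaryGroup_iff.mp B.2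
  -- inverses are adjugates (det = 1)
  have hAinv : (A : Matrix (Fin 2) (Fin 2) ℂ)⁻¹ = Matrix.adjugate A := by
    apply Matrix.inv_eq_left_inv
    rw [Matrix.adjugate_mul, hAdet, one_smul]
  have hBinv : (B : Matrix (Fin 2) (Fin 2) ℂ)⁻¹ = Matrix.adjugate B := by
    apply Matrix.inv_eq_left_inv
    rw [Matrix.adjugate_mul, hBdet, one_smul]
  -- also inverses are stars (unitarity), used for SU(2)-membership of the commutator
  have hAstar : (Matrix.adjugate (A : Matrix (Fin 2) (Fin 2) ℂ))
      = star (A : Matrix (Fin 2) (Fin 2) ℂ) := by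
    rw [← hAinv]
    exact Matrix.inv_eq_left_inv hAu.1
  have hBstar : (Matrix.adjugate (B : Matrix (Fin 2) (Fin 2) ℂ))
      = star (B : Matrix (Fin 2) (Fin 2) ℂ) := by
    rw [← hBinv]
    exact Matrix.inv_eq_left_inv hBu.1
  have hAstarmem : star (A : Matrix (Fin 2) (Fin 2) ℂ)
      ∈ Matrix.specialUnitaryGroup (Fin 2) ℂ := by
    refine Matrix.mem_specialUnitaryGroup_iff.mpr ⟨Unitary.star_mem hAu, ?_⟩
    rw [Matrix.star_eq_conjTranspose, Matrix.det_conjTranspose, hAdet, star_one]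
  have hBstarmem : star (B : Matrix (Fin 2) (Fin 2) ℂ)
      ∈ Matrix.specialUnitaryGroup (Fin 2) ℂ := by
    refine Matrix.mem_specialUnitaryGroup_iff.mpr ⟨Unitary.star_mem hBu, ?_⟩
    rw [Matrix.star_eq_conjTranspose, Matrix.det_conjTranspose, hBdet, star_one]
  have hABmem : (A : Matrix (Fin 2) (Fin 2) ℂ) * B ∈ Matrix.specialUnitaryGroup (Fin 2) ℂ :=
    mul_mem A.2 B.2
  have hCmem : (A : Matrix (Fin 2) (Fin 2) ℂ) * B * (A : Matrix (Fin 2) (Fin 2) ℂ)⁻¹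
      * (B : Matrix (Fin 2) (Fin 2) ℂ)⁻¹ ∈ Matrix.specialUnitaryGroup (Fin 2) ℂ := by
    rw [hAinv, hBinv, hAstar, hBstar]
    exact mul_mem (mul_mem hABmem hAstarmem) hBstarmem
  have hxb := su2_trace_bound _ A.2
  have hyb := su2_trace_bound _ B.2
  have hzb := su2_trace_bound _ hABmem
  have hwb := su2_trace_bound _ hCmem
  rw [← hx] at hxb
  rw [← hy] at hyb
  rw [← hz] at hzb
  rw [← hw] at hwb
  -- the Fricke identity
  have hw' : w = x ^ 2 + y ^ 2 + z ^ 2 - x * y * z - 2 := by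
    rw [hw, hAinv, hBinv, fricke_identity _ _ hAdet hBdet, ← hx, ← hy, ← hz]
  have hk : w.re = x.re ^ 2 + y.re ^ 2 + z.re ^ 2 - x.re * y.re * z.re - 2 := by
    rw [hw']
    simp [Complex.add_re, Complex.sub_re, Complex.mul_re, pow_two, hxb.1, hyb.1, hzb.1]
  refine ⟨hxb, hyb, hzb, hwb, ?_, ?_⟩
  · rw [← hk]; exact hwb.2.1
  · rw [← hk]; exact hwb.2.2
end
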